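/- arXiv:2402.03074 — 3 statements merged into one kernel-verified Lean document; each statement's English description precedes it below -/
import Mathlib

section
/- The quartic polynomial $p_0(x) = \sum_{l=0}^4 c_{0,l}\,((x-x_i)/\Delta x)^l$ with coefficients $c_{0,0} = -\tfrac{43}{384}\bar u_{i-1} + \tfrac{235}{192}\bar u_i - \tfrac{43}{384}\bar u_{i+1} - \tfrac{27}{64}\bar v_{i-1} + \tfrac{27}{64}\bar v_{i+1}$, $c_{0,1} = -\tfrac{63}{76}\bar u_{i-1} + \tfrac{63}{76}\bar u_{i+1} - \tfrac{75}{19}\bar v_{i-1} - \tfrac{75}{19}\bar v_{i+1}$, $c_{0,2} = \tfrac{23}{16}\bar u_{i-1} - \tfrac{23}{8}\bar u_i + \tfrac{23}{16}\bar u_{i+1} + \tfrac{45}{8}\bar v_{i-1} - \tfrac{45}{8}\bar v_{i+1}$, $c_{0,3} = \tfrac{5}{19}\bar u_{i-1} - \tfrac{5}{19}\bar u_{i+1} + \tfrac{60}{19}\bar v_{i-1} + \tfrac{60}{19}\bar v_{i+1}$, $c_{0,4} = -\tfrac58\bar u_{i-1} + \tfrac54\bar u_i - \tfrac58\bar u_{i+1}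 - \tfrac{15}{4}\bar v_{i-1} + \tfrac{15}{4}\bar v_{i+1}$ satisfies the five Hermite interpolation conditions: $\frac{1}{\Delta x}\int_{I_k} p_0\,dx = \bar u_k$ for $k = i-1, i, i+1$ and $\frac{1}{\Delta x}\int_{I_k} p_0 \cdot \frac{x-x_k}{\Delta x}\,dx = \bar v_k$ for $k = i-1, i+1$. -/
/-!
Substituting `x = x_i + Δx t` turns the mean of a polynomial in `(x - x_i)/Δx` over a cell
into the integral of the same polynomial over the reference cell `[k - 1/2, k + 1/2]`, which
the power rule evaluates exactly. Each of the five conditions thereby becomes a linear identity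
in `ū_{i±1}, ū_i, v̄_{i±1}` with rational coefficients.
-/

open intervalIntegral

theorem integral_sum_mul_pow {n : ℕ} (d : Fin n → ℝ) (a b : ℝ) :
    ∫ t in a..b, ∑ i, d i * t ^ (i : ℕ)
      = ∑ i, d i * ((b ^ ((i : ℕ) + 1) - a ^ ((i : ℕ) + 1)) / ((i : ℕ) + 1)) := by
  rw [integral_finsetSum fun i _ =>
    (show Continuous fun t : ℝ => d i * t ^ (i : ℕ) by fun_prop).intervalIntegrable a b]
  simp only [integral_const_mul, integral_pow]

theorem one_div_mul_integral_comp_sub_div (f : ℝ → ℝ) {Δx xi a b : ℝ} (hΔ : Δx ≠ 0) (s t : ℝ)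
    (ha : a = xi + s * Δx) (hb : b = xi + t * Δx) :
    (1 / Δx) * ∫ x in a..b, f ((x - xi) / Δx) = ∫ u in s..t, f u := by
  have hs : (a - xi) / Δx = s := by rw [ha]; field_simp; ring
  have ht : (b - xi) / Δx = t := by rw [hb]; field_simp; ring
  rw [integral_comp_sub_right (fun y => f (y / Δx)), one_div, ← smul_eq_mul,
    inv_smul_integral_comp_div, hs, ht]

theorem one_div_mul_integral_sum_mul_sub_div_pow {n : ℕ} (d : Fin n → ℝ) {Δx xi a b : ℝ}
    (hΔ : Δx ≠ 0) (s t : ℝ) (ha : a = xi + s * Δx) (hb : b = xi + t * Δx) :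
    (1 / Δx) * ∫ x in a..b, ∑ i, d i * ((x - xi) / Δx) ^ (i : ℕ)
      = ∑ i, d i * ((t ^ ((i : ℕ) + 1) - s ^ ((i : ℕ) + 1)) / ((i : ℕ) + 1)) := by
  rw [one_div_mul_integral_comp_sub_div (fun u => ∑ i, d i * u ^ (i : ℕ)) hΔ s t ha hb,
    integral_sum_mul_pow]

/-- The explicit quartic Hermite reconstruction polynomial satisfies the five
moment conditions on the cells `I_{i-1}, I_i, I_{i+1}`. -/
theorem stmt_3 (Δx xi : ℝ) (hΔ : 0 < Δx)
    (ubarm ubar ubarp vbarm vbarp : ℝ)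
    (c0 c1 c2 c3 c4 : ℝ)
    (hc0 : c0 = -(43/384) * ubarm + (235/192) * ubar - (43/384) * ubarp
      - (27/64) * vbarm + (27/64) * vbarp)
    (hc1 : c1 = -(63/76) * ubarm + (63/76) * ubarp - (75/19) * vbarm - (75/19) * vbarp)
    (hc2 : c2 = (23/16) * ubarm - (23/8) * ubar + (23/16) * ubarp
      + (45/8) * vbarm - (45/8) * vbarp)
    (hc3 : c3 = (5/19) * ubarm - (5/19) * ubarp + (60/19) * vbarm + (60/19) * vbarp)
    (hc4 : c4 = -(5/8) * ubarm + (5/4) * ubar - (5/8) * ubarp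
      - (15/4) * vbarm + (15/4) * vbarp)
    (p0 : ℝ → ℝ)
    (hp0 : ∀ x, p0 x = c0 + c1 * ((x - xi)/Δx) + c2 * ((x - xi)/Δx)^2
      + c3 * ((x - xi)/Δx)^3 + c4 * ((x - xi)/Δx)^4) :
    ((1/Δx) * ∫ x in (xi - Δx - Δx/2)..(xi - Δx + Δx/2), p0 x) = ubarm ∧
    ((1/Δx) * ∫ x in (xi - Δx/2)..(xi + Δx/2), p0 x) = ubar ∧
    ((1/Δx) * ∫ x in (xi + Δx - Δx/2)..(xi + Δx + Δx/2), p0 x) = ubarp ∧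
    ((1/Δx) * ∫ x in (xi - Δx - Δx/2)..(xi - Δx + Δx/2),
        p0 x * ((x - (xi - Δx))/Δx)) = vbarm ∧
    ((1/Δx) * ∫ x in (xi + Δx - Δx/2)..(xi + Δx + Δx/2),
        p0 x * ((x - (xi + Δx))/Δx)) = vbarp := by
  have hΔ₀ : Δx ≠ 0 := hΔ.ne'
  have hu : ∀ x, p0 x = ∑ i : Fin 5, ![c0, c1, c2, c3, c4] i * ((x - xi) / Δx) ^ (i : ℕ) := by
    intro x
    rw [hp0, Fin.sum_univ_five]
    dsimp
    ring
  have hvm : ∀ x, p0 x * ((x - (xi - Δx)) / Δx)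
      = ∑ i : Fin 6,
          ![c0, c0 + c1, c1 + c2, c2 + c3, c3 + c4, c4] i * ((x - xi) / Δx) ^ (i : ℕ) := by
    intro x
    have hshift : (x - (xi - Δx)) / Δx = (x - xi) / Δx + 1 := by field_simp; ring
    rw [hp0, hshift, Fin.sum_univ_six]
    dsimp
    ring
  have hvp : ∀ x, p0 x * ((x - (xi + Δx)) / Δx)
      = ∑ i : Fin 6,
          ![-c0, c0 - c1, c1 - c2, c2 - c3, c3 - c4, c4] i * ((x - xi) / Δx) ^ (i : ℕ) := by
    intro x
    have hshift : (x - (xi + Δx)) / Δx = (x - xi) / Δx - 1 := by field_simp; ring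
    rw [hp0, hshift, Fin.sum_univ_six]
    dsimp
    ring
  simp only [hvm, hvp]
  simp only [hu]
  subst hc0 hc1 hc2 hc3 hc4
  refine ⟨
    (one_div_mul_integral_sum_mul_sub_div_pow _ hΔ₀ (-3/2) (-1/2) (by ring) (by ring)).trans ?_,
    (one_div_mul_integral_sum_mul_sub_div_pow _ hΔ₀ (-1/2) (1/2) (by ring) (by ring)).trans ?_,
    (one_div_mul_integral_sum_mul_sub_div_pow _ hΔ₀ (1/2) (3/2) (by ring) (by ring)).trans ?_,
    (one_div_mul_integral_sum_mul_sub_div_pow _ hΔ₀ (-3/2) (-1/2) (by ring) (by ring)).trans ?_,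
    (one_div_mul_integral_sum_mul_sub_div_pow _ hΔ₀ (1/2) (3/2) (by ring) (by ring)).trans ?_⟩
  all_goals
    simp only [Fin.sum_univ_five, Fin.sum_univ_six]
    dsimp
    ring
end

section
/- The first-order-moment reconstruction $\hat v_i = \tfrac{5}{76}(\bar u_{i+1} - \bar u_{i-1}) - \tfrac{11}{38}(\bar v_{i+1} + \bar v_{i-1})$ is exact for polynomials of degree at most 4: if $u$ is any polynomial with $\deg u \le 4$, $\bar u_k = \frac{1}{\Delta x}\int_{I_k} u\,dx$, and $\bar v_k = \frac{1}{\Delta x}\int_{I_k} u\cdot\frac{x - x_k}{\Delta x}\,dx$, then $\hat v_i = \frac{1}{\Delta x}\int_{I_i} u \cdot \frac{x - x_i}{\Delta x}\,dx = \bar v_i$. -/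
open intervalIntegral Polynomial

lemma int_mono (a b k : ℝ) (n : ℕ) :
    ∫ x in a..b, k * x ^ n = k * ((b ^ (n+1) - a ^ (n+1)) / (n+1)) := by
  rw [intervalIntegral.integral_const_mul, integral_pow]

lemma poly_int (a b c0 c1 c2 c3 c4 c5 : ℝ) :
    ∫ x in a..b, (c0 + c1*x + c2*x^2 + c3*x^3 + c4*x^4 + c5*x^5)
      = c0*(b-a) + c1*((b^2-a^2)/2) + c2*((b^3-a^3)/3) + c3*((b^4-a^4)/4)
        + c4*((b^5-a^5)/5) + c5*((b^6-a^6)/6) := by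
  have h : (fun x : ℝ => c0 + c1*x + c2*x^2 + c3*x^3 + c4*x^4 + c5*x^5)
      = fun x : ℝ => c0*x^0 + c1*x^1 + c2*x^2 + c3*x^3 + c4*x^4 + c5*x^5 := by
    funext x; ring
  rw [h]
  rw [intervalIntegral.integral_add (by apply Continuous.intervalIntegrable; continuity)
        (by apply Continuous.intervalIntegrable; continuity),
      intervalIntegral.integral_add (by apply Continuous.intervalIntegrable; continuity)
        (by apply Continuous.intervalIntegrable; continuity),
      intervalIntegral.integral_add (by apply Continuous.intervalIntegrable; continuity)
        (by apply Continuous.intervalIntegrable; continuity),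
      intervalIntegral.integral_add (by apply Continuous.intervalIntegrable; continuity)
        (by apply Continuous.intervalIntegrable; continuity),
      intervalIntegral.integral_add (by apply Continuous.intervalIntegrable; continuity)
        (by apply Continuous.intervalIntegrable; continuity)]
  simp only [int_mono]
  push_cast
  field_simp
  ring

lemma moment_int (a b c d c0 c1 c2 c3 c4 : ℝ) :
    ∫ x in a..b, (c0 + c1*x + c2*x^2 + c3*x^3 + c4*x^4) * ((x - c)/d)
      = (-(c0*c)/d)*(b-a) + ((c0 - c1*c)/d)*((b^2-a^2)/2) + ((c1 - c2*c)/d)*((b^3-a^3)/3)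
        + ((c2 - c3*c)/d)*((b^4-a^4)/4) + ((c3 - c4*c)/d)*((b^5-a^5)/5)
        + (c4/d)*((b^6-a^6)/6) := by
  have h : (fun x : ℝ => (c0 + c1*x + c2*x^2 + c3*x^3 + c4*x^4) * ((x - c)/d))
      = fun x : ℝ => (-(c0*c)/d) + ((c0 - c1*c)/d)*x + ((c1 - c2*c)/d)*x^2
          + ((c2 - c3*c)/d)*x^3 + ((c3 - c4*c)/d)*x^4 + (c4/d)*x^5 := by
    funext x; ring
  rw [h, poly_int]

lemma plain_int (a b c0 c1 c2 c3 c4 : ℝ) :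
    ∫ x in a..b, (c0 + c1*x + c2*x^2 + c3*x^3 + c4*x^4)
      = c0*(b-a) + c1*((b^2-a^2)/2) + c2*((b^3-a^3)/3) + c3*((b^4-a^4)/4)
        + c4*((b^5-a^5)/5) := by
  have h : (fun x : ℝ => c0 + c1*x + c2*x^2 + c3*x^3 + c4*x^4)
      = fun x : ℝ => c0 + c1*x + c2*x^2 + c3*x^3 + c4*x^4 + 0*x^5 := by
    funext x; ring
  rw [h, poly_int]; ring

set_option maxHeartbeats 1000000 in
/-- Exactness of the first-order-moment reconstruction
`v̂ᵢ = (5/76)(ū_{i+1} - ū_{i-1}) - (11/38)(v̄_{i+1} + v̄_{i-1})` for polynomials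
of degree at most 4. -/
theorem stmt_11 (Δx xi : ℝ) (hΔ : 0 < Δx) (u : Polynomial ℝ) (hu : u.degree ≤ 4)
    (ubarm ubarp vbarm vbarp : ℝ)
    (hubarm : ubarm = (1/Δx) * ∫ x in (xi - Δx - Δx/2)..(xi - Δx + Δx/2), u.eval x)
    (hubarp : ubarp = (1/Δx) * ∫ x in (xi + Δx - Δx/2)..(xi + Δx + Δx/2), u.eval x)
    (hvbarm : vbarm = (1/Δx) * ∫ x in (xi - Δx - Δx/2)..(xi - Δx + Δx/2),
      u.eval x * ((x - (xi - Δx))/Δx))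
    (hvbarp : vbarp = (1/Δx) * ∫ x in (xi + Δx - Δx/2)..(xi + Δx + Δx/2),
      u.eval x * ((x - (xi + Δx))/Δx)) :
    (5/76) * (ubarp - ubarm) - (11/38) * (vbarp + vbarm) =
      (1/Δx) * ∫ x in (xi - Δx/2)..(xi + Δx/2), u.eval x * ((x - xi)/Δx) := by
  have hdeg : u.natDegree < 5 := by
    by_cases h0 : u = 0
    · simp [h0]
    · have h4 : u.natDegree ≤ 4 := Polynomial.natDegree_le_iff_degree_le.mpr hu
      omega
  have heval : ∀ x : ℝ, u.eval x
      = u.coeff 0 + u.coeff 1 * x + u.coeff 2 * x^2 + u.coeff 3 * x^3 + u.coeff 4 * x^4 := by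
    intro x
    rw [Polynomial.eval_eq_sum_range' hdeg]
    simp [Finset.sum_range_succ]
  set c0 := u.coeff 0; set c1 := u.coeff 1; set c2 := u.coeff 2
  set c3 := u.coeff 3; set c4 := u.coeff 4
  simp only [heval] at hubarm hubarp hvbarm hvbarp ⊢
  rw [plain_int] at hubarm hubarp
  rw [moment_int] at hvbarm hvbarp
  rw [moment_int, hubarm, hubarp, hvbarm, hvbarp]
  have hΔ' : Δx ≠ 0 := ne_of_gt hΔ
  field_simp
  ring
end

section
/- The quartic polynomial $p_0(x) = \sum_{l=0}^4 c_{0,l}((x - x_i)/\Delta x)^l$ solving the five-moment Hermite interpolation problem (matching $\bar u_{i-1}, \bar u_i, \bar u_{i+1}, \bar v_{i-1}, \bar v_{i+1}$) is unique: the $5\times 5$ linear system relating the coefficients $(c_{0,0},\dots,c_{0,4})$ to the five moments is invertible. -/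
open intervalIntegral

set_option maxHeartbeats 1000000

private lemma aux_int (a b c : ℝ) (n : ℕ) :
    ∫ ξ in a..b, ξ ^ n * (ξ + c) =
      (b ^ (n + 2) - a ^ (n + 2)) / (n + 2) + c * ((b ^ (n + 1) - a ^ (n + 1)) / (n + 1)) := by
  have h : ∀ ξ : ℝ, ξ ^ n * (ξ + c) = ξ ^ (n + 1) + c * ξ ^ n := by intro ξ; ring
  simp_rw [h]
  rw [integral_add (intervalIntegrable_pow _) ((intervalIntegrable_pow _).const_mul c),
    integral_const_mul, integral_pow, integral_pow]
  push_cast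
  ring

/-- Uniqueness of the quartic Hermite reconstruction: the `5 × 5` linear
system relating the scaled coefficients `(c₀,…,c₄)` to the five prescribed
moments (cell averages on `I_{i-1}, I_i, I_{i+1}` and first-order moments on
`I_{i-1}, I_{i+1}`, written in the scaled variable `ξ = (x - xᵢ)/Δx`) is
invertible. -/
theorem stmt_18 (M : Matrix (Fin 5) (Fin 5) ℝ)
    (hM : M = Matrix.of fun r l =>
      match r with
      | 0 => ∫ ξ in (-3/2 : ℝ)..(-1/2), ξ ^ (l : ℕ)
      | 1 => ∫ ξ in (-1/2 : ℝ)..(1/2), ξ ^ (l : ℕ)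
      | 2 => ∫ ξ in (1/2 : ℝ)..(3/2), ξ ^ (l : ℕ)
      | 3 => ∫ ξ in (-3/2 : ℝ)..(-1/2), ξ ^ (l : ℕ) * (ξ + 1)
      | 4 => ∫ ξ in (1/2 : ℝ)..(3/2), ξ ^ (l : ℕ) * (ξ - 1)) :
    IsUnit M := by
  have hM' : M = !![1, -1, 13/12, -5/4, 121/80;
                    1, 0, 1/12, 0, 1/80;
                    1, 1, 13/12, 5/4, 121/80;
                    0, 1/12, -1/6, 21/80, -23/60;
                    0, 1/12, 1/6, 21/80, 23/60] := by
    subst hM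
    have h3 : ∀ (a b : ℝ) (n : ℕ), (∫ ξ in a..b, ξ ^ n * (ξ - 1)) =
        ∫ ξ in a..b, ξ ^ n * (ξ + (-1)) := fun a b n => by simp [sub_eq_add_neg]
    ext r l
    fin_cases r <;> fin_cases l <;>
      norm_num [integral_pow, aux_int, h3, Matrix.of_apply, Matrix.cons_val_zero,
        Matrix.cons_val_one, Matrix.head_cons, Matrix.head_fin_const, Matrix.cons_val',
        Matrix.empty_val', Matrix.cons_val_fin_one, Matrix.vecHead, Matrix.vecTail,
        show ((2:Fin 5):ℕ)=2 from rfl, show ((3:Fin 5):ℕ)=3 from rfl,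
        show ((4:Fin 5):ℕ)=4 from rfl]
  have h : M * !![(-43/384 : ℝ), 235/192, -43/384, -27/64, 27/64;
         -63/76, 0, 63/76, -75/19, -75/19;
         23/16, -23/8, 23/16, 45/8, -45/8;
         5/19, 0, -5/19, 60/19, 60/19;
         -5/8, 5/4, -5/8, -15/4, 15/4] = 1 := by
    rw [hM']
    ext i j
    fin_cases i <;> fin_cases j <;>
      simp [Matrix.mul_apply, Fin.sum_univ_five, Matrix.one_apply] <;> norm_num
  letI := invertibleOfRightInverse _ _ h
  exact isUnit_of_invertible _
end
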